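/- Let G be a finite simple graph in which every vertex v has a twin, i.e., some vertex w ≠ v with N(w) = N(v) (open neighborhoods). Let P : V(G) → ℝ² be injective such that: (i) no three points of P(V(G)) are collinear; (ii) any two distinct connecting lines of P(V(G)) intersect; and (iii) every point of ℝ² not in P(V(G)) lies on at most two distinct connecting lines of P(V(G)). Let L be the set of lines {affine span of {P u, P v} : {u, v} an edge of G}. Then for every positive integer t: there exists a set of at most t points in ℝ² such that every line of L contains at least one of these points, if and only if G has a vertex cover of size at most t. -/

import Mathlib

/-!
A point of `P(V)` lies only on the lines of edges at its vertex, and by (iii) together with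
injectivity of `e ↦ line(P e)` a point outside `P(V)` lies on at most two edge lines. So a point
cover `Q` gives the set `S` of vertices it hits, and at most `2 |Q ∖ P(V)|` edges avoid `S`.
Twins let us complete `S` to a vertex cover paying one vertex per two uncovered edges: either
some uncovered vertex has two uncovered neighbours and is added, or the uncovered edges form a
matching and a swap with a twin makes progress for free.
-/

/-- Orientation of an ordered triple of points in the plane: the sign of the
determinant of the 3×3 matrix with rows (1, aₓ, a_y), (1, bₓ, b_y), (1, cₓ, c_y). -/
noncomputable def orient (a b c : ℝ × ℝ) : ℝ :=
  Real.sign (Matrix.det !![1, a.1, a.2; 1, b.1, b.2; 1, c.1, c.2])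

/-- A line in ℝ² is a one-dimensional affine subspace of ℝ². -/
def IsLine (l : AffineSubspace ℝ (ℝ × ℝ)) : Prop :=
  Module.finrank ℝ l.direction = 1

/-- `P` can be covered by at most `k` lines. -/
def CoverableBy (P : Set (ℝ × ℝ)) (k : ℕ) : Prop :=
  ∃ L : Set (AffineSubspace ℝ (ℝ × ℝ)), L.Finite ∧ L.ncard ≤ k ∧
    (∀ l ∈ L, IsLine l) ∧ ∀ p ∈ P, ∃ l ∈ L, p ∈ l

/-- A connecting line of a point set `X`: a line passing through at least two
distinct points of `X`. -/
def IsConnectingLine (X : Set (ℝ × ℝ)) (l : AffineSubspace ℝ (ℝ × ℝ)) : Prop :=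
  IsLine l ∧ ∃ p ∈ X, ∃ q ∈ X, p ≠ q ∧ p ∈ l ∧ q ∈ l
/-- `S` is a vertex cover of the simple graph `G`. -/
def IsVertexCover {V : Type*} (G : SimpleGraph V) (S : Set V) : Prop :=
  ∀ ⦃u v : V⦄, G.Adj u v → u ∈ S ∨ v ∈ S

namespace SimpleGraph

open Finset

variable {V : Type*} [Fintype V] [DecidableEq V] (G : SimpleGraph V) [DecidableRel G.Adj]

def uncoveredEdges (S : Finset V) : Finset (Sym2 V) :=
  G.edgeFinset.filter fun e => ∀ x ∈ e, x ∉ S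

variable {G}

@[simp]
lemma mk_mem_uncoveredEdges {S : Finset V} {u v : V} :
    s(u, v) ∈ G.uncoveredEdges S ↔ G.Adj u v ∧ u ∉ S ∧ v ∉ S := by
  simp [uncoveredEdges]

lemma card_uncoveredEdges_insert_add_two_le {S : Finset V} {w y₁ y₂ : V} (hw : w ∉ S)
    (hy : y₁ ≠ y₂) (h₁ : G.Adj w y₁) (h₂ : G.Adj w y₂) (hy₁ : y₁ ∉ S) (hy₂ : y₂ ∉ S) :
    #(G.uncoveredEdges (insert w S)) + 2 ≤ #(G.uncoveredEdges S) := by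
  have hsub : {s(w, y₁), s(w, y₂)} ⊆ G.uncoveredEdges S := by
    simp [insert_subset_iff, *]
  have hcard : #({s(w, y₁), s(w, y₂)} : Finset (Sym2 V)) = 2 :=
    card_pair (by rwa [Ne, Sym2.congr_right])
  have hle : G.uncoveredEdges (insert w S) ⊆ G.uncoveredEdges S \ {s(w, y₁), s(w, y₂)} := by
    intro e he
    simp only [uncoveredEdges, mem_filter, mem_insert, not_or] at he
    simp only [uncoveredEdges, mem_sdiff, mem_filter, mem_insert, mem_singleton]
    refine ⟨⟨he.1, fun x hx => (he.2 x hx).2⟩, ?_⟩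
    rintro (rfl | rfl) <;> exact (he.2 w (Sym2.mem_mk_left _ _)).1 rfl
  have := card_le_card hle
  rw [card_sdiff_of_subset hsub, hcard] at this
  have := card_le_card hsub
  omega

lemma uncoveredEdges_swap_subset {S : Finset V} {u u' v : V} (hu' : u' ∈ S)
    (htwin : G.neighborSet u' = G.neighborSet u)
    (hv : ∀ y, G.Adj u y → y ∉ S → y = v) :
    G.uncoveredEdges (insert v (S.erase u')) ⊆ (G.uncoveredEdges S).erase s(u, v) := by
  have hne : ∀ ⦃x y⦄, G.Adj x y → y ∉ insert v (S.erase u') → x ≠ u' := by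
    rintro x y hxy hy rfl
    simp only [mem_insert, mem_erase, not_or, not_and_or, not_not] at hy
    obtain ⟨hyv, rfl | hyS⟩ := hy
    · exact G.irrefl hxy
    · exact hyv (hv y (by rwa [← mem_neighborSet, ← htwin]) hyS)
  intro e he
  induction e using Sym2.ind with | _ a b => ?_
  obtain ⟨hab, ha, hb⟩ := mk_mem_uncoveredEdges.1 he
  have ha' := hne hab hb
  have hb' := hne hab.symm ha
  simp only [mem_insert, mem_erase, not_or, not_and_or, not_not] at ha hb
  simp only [mem_erase, mk_mem_uncoveredEdges, Ne, Sym2.eq_iff, not_or, not_and_or]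
  tauto

lemma exists_isVertexCover_two_mul_card_le
    (htwin : ∀ v, ∃ w, w ≠ v ∧ G.neighborSet w = G.neighborSet v) (S : Finset V) :
    ∃ T : Finset V, IsVertexCover G T ∧ 2 * #T ≤ 2 * #S + #(G.uncoveredEdges S) := by
  by_cases hS : IsVertexCover G S
  · exact ⟨S, hS, by omega⟩
  obtain ⟨u, v, huv, hu, hv⟩ : ∃ u v, G.Adj u v ∧ u ∉ S ∧ v ∉ S := by
    simpa [IsVertexCover] using hS
  by_cases htwo : ∃ w ∉ S, ∃ y₁ y₂, y₁ ≠ y₂ ∧ G.Adj w y₁ ∧ G.Adj w y₂ ∧ y₁ ∉ S ∧ y₂ ∉ S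
  · obtain ⟨w, hw, y₁, y₂, hy, h₁, h₂, hy₁, hy₂⟩ := htwo
    have hdec := card_uncoveredEdges_insert_add_two_le hw hy h₁ h₂ hy₁ hy₂
    obtain ⟨T, hT, hcard⟩ := exists_isVertexCover_two_mul_card_le htwin (insert w S)
    exact ⟨T, hT, by have := card_insert_le w S; omega⟩
  · push Not at htwo
    -- Now the uncovered edges form a matching, so the twin `u'` of `u`, a neighbour of `v`,
    -- lies in `S`, and trading `u'` for `v` covers `uv` without uncovering anything.
    obtain ⟨u', hu'u, htw⟩ := htwin u
    have hv' : ∀ y, G.Adj u y → y ∉ S → y = v := fun y hy hyS =>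
      by_contra fun h => hv (htwo u hu y v h hy huv hyS)
    have hu' : u' ∈ S := by
      by_contra h
      have hu'v : G.Adj u' v := by rwa [← mem_neighborSet, htw]
      exact h (htwo v hv u u' hu'u.symm huv.symm hu'v.symm hu)
    have hdec : #(G.uncoveredEdges (insert v (S.erase u'))) < #(G.uncoveredEdges S) :=
      (card_le_card (uncoveredEdges_swap_subset hu' htw hv')).trans_lt
        (card_erase_lt_of_mem (by simp [*]))
    obtain ⟨T, hT, hcard⟩ := exists_isVertexCover_two_mul_card_le htwin (insert v (S.erase u'))
    have := card_insert_le v (S.erase u')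
    have := card_erase_add_one hu'
    exact ⟨T, hT, by omega⟩
termination_by #(G.uncoveredEdges S)
decreasing_by all_goals omega

end SimpleGraph

section PairLine

variable {V k W Pt : Type*} [DivisionRing k] [AddCommGroup W] [Module k W] [AddTorsor W Pt]
  {P : V → Pt}

variable (k P) in
def pairLine : Sym2 V → AffineSubspace k Pt :=
  Sym2.lift ⟨fun a b => line[k, P a, P b], fun a b => by dsimp only; rw [Set.pair_comm]⟩

variable (hP : Function.Injective P)
  (hgen : ∀ p ∈ Set.range P, ∀ q ∈ Set.range P, ∀ r ∈ Set.range P,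
    p ≠ q → p ≠ r → q ≠ r → ¬ Collinear k ({p, q, r} : Set Pt))
include hP hgen

lemma mem_pairLine_iff {e : Sym2 V} (he : ¬ e.IsDiag) {c : V} :
    P c ∈ pairLine k P e ↔ c ∈ e := by
  induction e using Sym2.ind with | _ a b => ?_
  refine ⟨fun h => ?_, ?_⟩
  · by_contra! hc
    simp only [Sym2.mem_iff, not_or] at hc
    exact hgen (P c) ⟨c, rfl⟩ (P a) ⟨a, rfl⟩ (P b) ⟨b, rfl⟩ (hP.ne hc.1) (hP.ne hc.2)
      (hP.ne he) (collinear_insert_of_mem_affineSpan_pair h)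
  · intro h
    rcases Sym2.mem_iff.1 h with rfl | rfl
    exacts [left_mem_affineSpan_pair k _ _, right_mem_affineSpan_pair k _ _]

lemma pairLine_injOn : Set.InjOn (pairLine k P) {e | ¬ e.IsDiag} := by
  intro e he e' he' h
  induction e' using Sym2.ind with | _ c d => ?_
  have hc := (mem_pairLine_iff hP hgen he).1 (by rw [h]; exact left_mem_affineSpan_pair k _ _)
  have hd := (mem_pairLine_iff hP hgen he).1 (by rw [h]; exact right_mem_affineSpan_pair k _ _)
  exact Sym2.eq_of_ne_mem he' hc hd (Sym2.mem_mk_left c d) (Sym2.mem_mk_right c d)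

end PairLine

lemma isLine_affineSpan_pair {p q : ℝ × ℝ} (h : p ≠ q) : IsLine line[ℝ, p, q] := by
  rw [IsLine, direction_affineSpan, vectorSpan_pair]
  exact finrank_span_singleton (vsub_ne_zero.mpr h)

section Plane

variable {V : Type*} {P : V → ℝ × ℝ} (hP : Function.Injective P)
include hP

lemma isConnectingLine_pairLine {e : Sym2 V} (he : ¬ e.IsDiag) :
    IsConnectingLine (Set.range P) (pairLine ℝ P e) := by
  induction e using Sym2.ind with | _ a b => ?_
  exact ⟨isLine_affineSpan_pair (hP.ne he), P a, ⟨a, rfl⟩, P b, ⟨b, rfl⟩, hP.ne he,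
    left_mem_affineSpan_pair ℝ _ _, right_mem_affineSpan_pair ℝ _ _⟩

variable (hgen : ∀ p ∈ Set.range P, ∀ q ∈ Set.range P, ∀ r ∈ Set.range P,
      p ≠ q → p ≠ r → q ≠ r → ¬ Collinear ℝ ({p, q, r} : Set (ℝ × ℝ)))
    (hthree : ∀ x : ℝ × ℝ, x ∉ Set.range P → ∀ l₁ l₂ l₃ : AffineSubspace ℝ (ℝ × ℝ),
      IsConnectingLine (Set.range P) l₁ → IsConnectingLine (Set.range P) l₂ →
      IsConnectingLine (Set.range P) l₃ → l₁ ≠ l₂ → l₁ ≠ l₃ → l₂ ≠ l₃ →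
      x ∈ l₁ → x ∈ l₂ → x ∈ l₃ → False)
include hgen hthree

open Finset in
lemma card_le_two_mul_card_of_forall_exists_mem_pairLine {E : Finset (Sym2 V)}
    (hE : ∀ e ∈ E, ¬ e.IsDiag) {R : Finset (ℝ × ℝ)} (hR : ∀ x ∈ R, x ∉ Set.range P)
    (hcov : ∀ e ∈ E, ∃ x ∈ R, x ∈ pairLine ℝ P e) : #E ≤ 2 * #R := by
  classical
  have := card_mul_le_card_mul (fun e x => x ∈ pairLine ℝ P e) (m := 1) (n := 2)
    (fun e he => card_pos.2 <| by simpa [bipartiteAbove, Finset.Nonempty] using hcov e he)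
    (fun x hx => ?_)
  · omega
  by_contra! h
  obtain ⟨e₁, h₁, e₂, h₂, e₃, h₃, h₁₂, h₁₃, h₂₃⟩ := two_lt_card.1 h
  simp only [bipartiteBelow, mem_filter] at h₁ h₂ h₃
  have hne {e e'} (he : e ∈ E) (he' : e' ∈ E) (h : e ≠ e') : pairLine ℝ P e ≠ pairLine ℝ P e' :=
    fun heq => h (pairLine_injOn hP hgen (hE e he) (hE e' he') heq)
  exact hthree x (hR x hx) _ _ _ (isConnectingLine_pairLine hP (hE _ h₁.1))
    (isConnectingLine_pairLine hP (hE _ h₂.1)) (isConnectingLine_pairLine hP (hE _ h₃.1))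
    (hne h₁.1 h₂.1 h₁₂) (hne h₁.1 h₃.1 h₁₃) (hne h₂.1 h₃.1 h₂₃) h₁.2 h₂.2 h₃.2

open Finset in
lemma exists_isVertexCover_card_le_of_forall_exists_mem [Fintype V] (G : SimpleGraph V)
    (htwin : ∀ v, ∃ w, w ≠ v ∧ G.neighborSet w = G.neighborSet v) (Q : Finset (ℝ × ℝ))
    (hQ : ∀ u v, G.Adj u v → ∃ q ∈ Q, q ∈ line[ℝ, P u, P v]) :
    ∃ T : Finset V, IsVertexCover G T ∧ #T ≤ #Q := by
  classical
  set S := univ.filter fun v => P v ∈ Q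
  set R := Q.filter fun x => x ∉ Set.range P
  have hS : #S ≤ #(Q.filter fun x => x ∈ Set.range P) :=
    card_le_card_of_injOn P (fun v hv => by simp_all [S]) hP.injOn
  have hR : #(G.uncoveredEdges S) ≤ 2 * #R := by
    refine card_le_two_mul_card_of_forall_exists_mem_pairLine hP hgen hthree
      (fun e he => G.not_isDiag_of_mem_edgeSet (by simp_all [SimpleGraph.uncoveredEdges]))
      (fun x hx => (mem_filter.1 hx).2) fun e he => ?_
    induction e using Sym2.ind with | _ a b => ?_
    obtain ⟨hab, ha, hb⟩ := SimpleGraph.mk_mem_uncoveredEdges.1 he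
    obtain ⟨q, hq, hqab⟩ := hQ a b hab
    refine ⟨q, mem_filter.2 ⟨hq, ?_⟩, hqab⟩
    rintro ⟨c, rfl⟩
    have hc := (mem_pairLine_iff hP hgen (e := s(a, b)) (G.not_isDiag_of_mem_edgeSet hab)).1 hqab
    rcases Sym2.mem_iff.1 hc with rfl | rfl
    exacts [ha (by simpa [S] using hq), hb (by simpa [S] using hq)]
  obtain ⟨T, hT, hTcard⟩ := G.exists_isVertexCover_two_mul_card_le htwin S
  have hSR : #S + #R ≤ #Q :=
    (Nat.add_le_add_right hS _).trans (card_filter_add_card_filter_not _).le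
  exact ⟨T, hT, by omega⟩

end Plane

theorem reduction_geometric_core_general {V : Type*} [Fintype V] (G : SimpleGraph V)
    (htwin : ∀ v : V, ∃ w : V, w ≠ v ∧ G.neighborSet w = G.neighborSet v)
    (P : V → ℝ × ℝ) (hPinj : Function.Injective P)
    (hgen : ∀ p ∈ Set.range P, ∀ q ∈ Set.range P, ∀ r ∈ Set.range P,
      p ≠ q → p ≠ r → q ≠ r → ¬ Collinear ℝ ({p, q, r} : Set (ℝ × ℝ)))
    (hthree : ∀ x : ℝ × ℝ, x ∉ Set.range P → ∀ l₁ l₂ l₃ : AffineSubspace ℝ (ℝ × ℝ),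
      IsConnectingLine (Set.range P) l₁ → IsConnectingLine (Set.range P) l₂ →
      IsConnectingLine (Set.range P) l₃ → l₁ ≠ l₂ → l₁ ≠ l₃ → l₂ ≠ l₃ →
      x ∈ l₁ → x ∈ l₂ → x ∈ l₃ → False)
    (L : Set (AffineSubspace ℝ (ℝ × ℝ)))
    (hL : L = {l | ∃ u v : V, G.Adj u v ∧ l = affineSpan ℝ ({P u, P v} : Set (ℝ × ℝ))})
    (t : ℕ) :
    (∃ Q : Set (ℝ × ℝ), Q.Finite ∧ Q.ncard ≤ t ∧ ∀ l ∈ L, ∃ q ∈ Q, q ∈ l) ↔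
      (∃ S : Set V, S.ncard ≤ t ∧ IsVertexCover G S) := by
  classical
  subst hL
  constructor
  · rintro ⟨Q, hQfin, hQcard, hQcov⟩
    obtain ⟨T, hT, hTcard⟩ := exists_isVertexCover_card_le_of_forall_exists_mem hPinj hgen hthree G
      htwin hQfin.toFinset fun u v huv => by simpa using hQcov _ ⟨u, v, huv, rfl⟩
    rw [Set.ncard_eq_toFinset_card Q hQfin] at hQcard
    exact ⟨T, by rw [Set.ncard_coe_finset]; omega, hT⟩
  · rintro ⟨S, hS, hSvc⟩
    refine ⟨P '' S, S.toFinite.image P, (Set.ncard_image_of_injective S hPinj).trans_le hS, ?_⟩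
    rintro _ ⟨u, v, huv, rfl⟩
    rcases hSvc huv with h | h
    exacts [⟨P u, Set.mem_image_of_mem P h, left_mem_affineSpan_pair ℝ _ _⟩,
      ⟨P v, Set.mem_image_of_mem P h, right_mem_affineSpan_pair ℝ _ _⟩]

/-- Geometric core of the reduction from Vertex Cover to Line Point Cover: if every
vertex of `G` has a twin and the vertices are placed in general position, with no
two connecting lines parallel and no point outside the image on three connecting
lines, then the family of lines through the images of adjacent vertex pairs can be
hit by at most `t` points iff `G` has a vertex cover of size at most `t`. -/
theorem reduction_geometric_core {V : Type*} [Fintype V] (G : SimpleGraph V)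
    (htwin : ∀ v : V, ∃ w : V, w ≠ v ∧ G.neighborSet w = G.neighborSet v)
    (P : V → ℝ × ℝ) (hPinj : Function.Injective P)
    (hgen : ∀ p ∈ Set.range P, ∀ q ∈ Set.range P, ∀ r ∈ Set.range P,
      p ≠ q → p ≠ r → q ≠ r → ¬ Collinear ℝ ({p, q, r} : Set (ℝ × ℝ)))
    (hpar : ∀ l₁ l₂ : AffineSubspace ℝ (ℝ × ℝ), IsConnectingLine (Set.range P) l₁ →
      IsConnectingLine (Set.range P) l₂ → l₁ ≠ l₂ → ∃ x : ℝ × ℝ, x ∈ l₁ ∧ x ∈ l₂)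
    (hthree : ∀ x : ℝ × ℝ, x ∉ Set.range P → ∀ l₁ l₂ l₃ : AffineSubspace ℝ (ℝ × ℝ),
      IsConnectingLine (Set.range P) l₁ → IsConnectingLine (Set.range P) l₂ →
      IsConnectingLine (Set.range P) l₃ → l₁ ≠ l₂ → l₁ ≠ l₃ → l₂ ≠ l₃ →
      x ∈ l₁ → x ∈ l₂ → x ∈ l₃ → False)
    (L : Set (AffineSubspace ℝ (ℝ × ℝ)))
    (hL : L = {l | ∃ u v : V, G.Adj u v ∧ l = affineSpan ℝ ({P u, P v} : Set (ℝ × ℝ))})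
    (t : ℕ) (ht : 0 < t) :
    (∃ Q : Set (ℝ × ℝ), Q.Finite ∧ Q.ncard ≤ t ∧ ∀ l ∈ L, ∃ q ∈ Q, q ∈ l) ↔
      (∃ S : Set V, S.ncard ≤ t ∧ IsVertexCover G S) :=
  reduction_geometric_core_general G htwin P hPinj hgen hthree L hL t
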